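/- arXiv:1408.0649 — 2 statements merged into one kernel-verified Lean document; each statement's English description precedes it below -/
import Mathlib

section
/- Let G be a connected graph of order n ≥ 3. Every (n−1)-element subset of V(G) is a weak total resolving set if and only if G contains no twin vertices. Equivalently, res_wt(G) = n if and only if G contains a pair of twin vertices. -/
open SimpleGraph

variable {V : Type*}

/-- `W` is a resolving set: every pair of distinct vertices is resolved by some `w ∈ W`. -/
def IsResolvingSet (G : SimpleGraph V) (W : Finset V) : Prop :=
  ∀ u v : V, u ≠ v → ∃ w ∈ W, G.dist u w ≠ G.dist v w

/-- `W` is a weak total resolving set. -/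
def IsWTRSet (G : SimpleGraph V) (W : Finset V) : Prop :=
  IsResolvingSet G W ∧
    ∀ v ∈ W, ∀ u : V, u ∉ W → ∃ w ∈ W, w ≠ v ∧ G.dist u w ≠ G.dist v w

/-- `u` and `v` are twin vertices. -/
def AreTwins (G : SimpleGraph V) (u v : V) : Prop :=
  u ≠ v ∧ G.neighborSet u \ {v} = G.neighborSet v \ {u}

/-- Metric dimension. -/
noncomputable def metricDim (G : SimpleGraph V) : ℕ :=
  sInf {k | ∃ W : Finset V, W.card = k ∧ IsResolvingSet G W}

/-- Weak total metric dimension. -/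
noncomputable def wtDim (G : SimpleGraph V) : ℕ :=
  sInf {k | ∃ W : Finset V, W.card = k ∧ IsWTRSet G W}

/-- Weak total resolving number: least `r` such that every `r`-subset is a WTR-set. -/
noncomputable def resWt (G : SimpleGraph V) : ℕ :=
  sInf {r | ∀ W : Finset V, W.card = r → IsWTRSet G W}

/-!
Twins `u, v` are at equal distance from every third vertex, so no set containing `u` but
not `v` is weak total resolving; such sets exist in every size `1 ≤ r < n`, and for `n ≥ 2`
the empty set is not resolving either. Without twins, the vertex `u` missed by an
`(n-1)`-set `W` and any `v ∈ W` differ in their adjacency to some third vertex, which lies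
in `W` and resolves them.
-/

namespace SimpleGraph

variable {G : SimpleGraph V} {u v w : V}

/-- A shortest `v`–`w` walk starts with `u` or with a neighbour of `u`. -/
lemma dist_le_dist_of_neighborSet_sdiff_eq
    (hN : G.neighborSet u \ {v} = G.neighborSet v \ {u}) (hvw : v ≠ w) (hr : G.Reachable v w) :
    G.dist u w ≤ G.dist v w := by
  obtain ⟨p, hp⟩ := hr.exists_walk_length_eq_dist
  cases p with
  | nil => exact absurd rfl hvw
  | @cons _ x _ hvx q =>
    rw [← hp, Walk.length_cons]
    by_cases hxu : x = u
    · subst hxu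
      exact (dist_le q).trans (Nat.le_succ _)
    · have hux : x ∈ G.neighborSet u \ {v} := hN ▸ ⟨hvx, hxu⟩
      exact dist_le (.cons hux.1 q)

lemma exists_dist_ne_of_not_areTwins (huv : u ≠ v) (h : ¬ AreTwins G u v) :
    ∃ w, w ≠ u ∧ w ≠ v ∧ G.dist u w ≠ G.dist v w := by
  by_contra! hall
  refine h ⟨huv, Set.ext fun w => ?_⟩
  by_cases hwu : w = u
  · subst hwu; simp
  by_cases hwv : w = v
  · subst hwv; simp
  simp only [Set.mem_sdiff, mem_neighborSet, Set.mem_singleton_iff, hwu, hwv, not_false_eq_true,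
    and_true, ← dist_eq_one_iff_adj, hall w hwu hwv]

end SimpleGraph

variable {G : SimpleGraph V} {u v w : V} {W : Finset V}

lemma AreTwins.dist_eq (h : AreTwins G u v) (hG : G.Connected) (hwu : w ≠ u) (hwv : w ≠ v) :
    G.dist u w = G.dist v w :=
  le_antisymm (dist_le_dist_of_neighborSet_sdiff_eq h.2 hwv.symm (hG v w))
    (dist_le_dist_of_neighborSet_sdiff_eq h.2.symm hwu.symm (hG u w))

lemma AreTwins.not_isWTRSet (h : AreTwins G u v) (hG : G.Connected) (huW : u ∈ W)
    (hvW : v ∉ W) : ¬ IsWTRSet G W := fun hW => by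
  obtain ⟨w, hwW, hwu, hd⟩ := hW.2 u huW v hvW
  exact hd (h.dist_eq hG hwu (ne_of_mem_of_not_mem hwW hvW)).symm

lemma isResolvingSet_of_subsingleton_compl (hG : G.Connected)
    (hW : (↑W : Set V)ᶜ.Subsingleton) : IsResolvingSet G W := by
  intro a b hab
  by_cases ha : a ∈ W
  · exact ⟨a, ha, by simpa using (hG.pos_dist_of_ne hab.symm).ne⟩
  · have hb : b ∈ W := by_contra fun hb => hab (hW ha hb)
    exact ⟨b, hb, by simpa using (hG.pos_dist_of_ne hab).ne'⟩

lemma isWTRSet_of_subsingleton_compl (hG : G.Connected) (htw : ¬ ∃ u v, AreTwins G u v)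
    (hW : (↑W : Set V)ᶜ.Subsingleton) : IsWTRSet G W := by
  refine ⟨isResolvingSet_of_subsingleton_compl hG hW, fun v hv u hu => ?_⟩
  obtain ⟨w, hwv, hwu, hd⟩ :=
    exists_dist_ne_of_not_areTwins (ne_of_mem_of_not_mem hv hu) fun h => htw ⟨v, u, h⟩
  exact ⟨w, by_contra fun hw => hwu (hW hw hu), hwv, hd.symm⟩

lemma subsingleton_compl_of_card_eq [Fintype V] (hW : W.card = Fintype.card V - 1) :
    (↑W : Set V)ᶜ.Subsingleton := by
  classical
  have hcard : Wᶜ.card ≤ 1 := by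
    rw [Finset.card_compl]
    omega
  intro a ha b hb
  exact Finset.card_le_one.mp hcard a (Finset.mem_compl.mpr ha) b (Finset.mem_compl.mpr hb)

lemma isWTRSet_univ [Fintype V] (hG : G.Connected) : IsWTRSet G Finset.univ :=
  ⟨isResolvingSet_of_subsingleton_compl hG (by simp),
    fun _ _ u hu => absurd (Finset.mem_univ u) hu⟩

lemma resWt_le {r : ℕ} (h : ∀ W : Finset V, W.card = r → IsWTRSet G W) : resWt G ≤ r :=
  Nat.sInf_le h

lemma AreTwins.card_le_of_forall_isWTRSet [Fintype V] (htw : AreTwins G u v) (hG : G.Connected)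
    (hn : 2 ≤ Fintype.card V) {r : ℕ} (h : ∀ W : Finset V, W.card = r → IsWTRSet G W) :
    Fintype.card V ≤ r := by
  classical
  by_contra! hr
  obtain rfl | hr0 := Nat.eq_zero_or_pos r
  · obtain ⟨a, b, hab⟩ := Fintype.exists_pair_of_one_lt_card hn
    obtain ⟨w, hw, -⟩ := (h ∅ rfl).1 a b hab
    exact Finset.notMem_empty w hw
  have hsub : {u} ⊆ Finset.univ.erase v := by simpa using htw.1
  obtain ⟨W, huW, hWv, hWr⟩ := Finset.exists_subsuperset_card_eq (n := r) hsub
    (by rwa [Finset.card_singleton])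
    (by rw [Finset.card_erase_of_mem (Finset.mem_univ v), Finset.card_univ]; omega)
  exact htw.not_isWTRSet hG (huW (Finset.mem_singleton_self u)) (fun hv => by simpa using hWv hv)
    (h W hWr)

lemma AreTwins.resWt_eq_card [Fintype V] (htw : AreTwins G u v) (hG : G.Connected)
    (hn : 2 ≤ Fintype.card V) : resWt G = Fintype.card V := by
  have huniv : ∀ W : Finset V, W.card = Fintype.card V → IsWTRSet G W := fun W hW =>
    Finset.eq_univ_of_card W hW ▸ isWTRSet_univ hG
  exact le_antisymm (resWt_le huniv)
    (le_csInf ⟨_, huniv⟩ fun _ hr => htw.card_le_of_forall_isWTRSet hG hn hr)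

/-- every `(n-1)`-subset is a WTR-set iff `G` has no twins; equivalently,
`res_wt(G) = n` iff `G` contains a pair of twins. -/
theorem resWt_eq_card_iff_twins [Fintype V] (G : SimpleGraph V) (hG : G.Connected)
    (hn : 3 ≤ Fintype.card V) :
    ((∀ W : Finset V, W.card = Fintype.card V - 1 → IsWTRSet G W) ↔
      ¬ ∃ u v : V, AreTwins G u v) ∧
    (resWt G = Fintype.card V ↔ ∃ u v : V, AreTwins G u v) := by
  have hpred : (∀ W : Finset V, W.card = Fintype.card V - 1 → IsWTRSet G W) ↔
      ¬ ∃ u v : V, AreTwins G u v := by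
    refine ⟨fun h ⟨u, v, htw⟩ => ?_, fun htw W hW =>
      isWTRSet_of_subsingleton_compl hG htw (subsingleton_compl_of_card_eq hW)⟩
    have := htw.card_le_of_forall_isWTRSet hG (by omega) h
    omega
  refine ⟨hpred, fun hres => ?_, fun ⟨u, v, htw⟩ => htw.resWt_eq_card hG (by omega)⟩
  by_contra htw
  have := resWt_le (hpred.2 htw)
  omega
end

section
/- If every k-element subset of V(G) is a weak total resolving set for a connected graph G, then the maximum degree of G is at most 2^{k−1} + k − 1. -/
open SimpleGraph

variable {V : Type*}

/-!
Take a vertex `u` of degree at least `k - 1` and `U = {u} ∪ S` with `S` a set of `k - 1`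
neighbours of `u`. Every remaining neighbour `x` of `u` is at distance `1` from `u` and, for
`w ∈ S`, at distance `1` or `2` from `w` according to whether `x ~ w`. So the distance vector
of `x` to `U` is determined by its adjacency pattern on `S`, one of `2 ^ (k - 1)`; as `U` is
resolving, at most `2 ^ (k - 1)` neighbours of `u` lie outside `U`.
-/

open Finset

lemma IsResolvingSet.mono {G : SimpleGraph V} {W W' : Finset V} (hW : IsResolvingSet G W)
    (hWW' : W ⊆ W') : IsResolvingSet G W' := fun u v huv ↦
  let ⟨w, hw, hdist⟩ := hW u v huv
  ⟨w, hWW' hw, hdist⟩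

namespace SimpleGraph

variable {G : SimpleGraph V} [DecidableRel G.Adj]

lemma dist_eq_ite_adj_of_adj_of_adj {x u w : V} (hxu : G.Adj x u) (huw : G.Adj u w)
    (hxw : x ≠ w) : G.dist x w = if G.Adj x w then 1 else 2 := by
  split_ifs with hadj
  · exact dist_eq_one_iff_adj.mpr hadj
  · have hle : G.dist x w ≤ 2 := dist_le (.cons hxu (.cons huw .nil))
    have hpos : 0 < G.dist x w := (hxu.reachable.trans huw.reachable).pos_dist_of_ne hxw
    have hne : G.dist x w ≠ 1 := fun h ↦ hadj (dist_eq_one_iff_adj.mp h)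
    omega

variable [Fintype V] [DecidableEq V]

lemma card_neighborFinset_sdiff_le_two_pow {u : V} {S : Finset V}
    (hres : IsResolvingSet G (insert u S)) (hS : S ⊆ G.neighborFinset u) :
    #(G.neighborFinset u \ S) ≤ 2 ^ #S := by
  let pattern : V → S → Bool := fun x w ↦ decide (G.Adj x w)
  have hdist : ∀ x ∈ G.neighborFinset u \ S, ∀ w ∈ S,
      G.dist x w = if G.Adj x w then 1 else 2 :=
    fun x hx w hw ↦ by
      rw [mem_sdiff, mem_neighborFinset] at hx
      exact dist_eq_ite_adj_of_adj_of_adj hx.1.symm ((mem_neighborFinset ..).mp (hS hw))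
        (ne_of_mem_of_not_mem hw hx.2).symm
  calc #(G.neighborFinset u \ S)
      ≤ #(univ : Finset (S → Bool)) := by
        refine card_le_card_of_injOn pattern (fun _ _ ↦ mem_coe.mpr (mem_univ _)) ?_
        intro x hx y hy hxy
        by_contra hne
        obtain ⟨w, hw, hwdist⟩ := hres x y hne
        rcases mem_insert.mp hw with rfl | hwS
        · have hxw := (mem_neighborFinset ..).mp (mem_sdiff.mp hx).1
          have hyw := (mem_neighborFinset ..).mp (mem_sdiff.mp hy).1
          exact hwdist ((dist_eq_one_iff_adj.mpr hxw.symm).trans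
            (dist_eq_one_iff_adj.mpr hyw.symm).symm)
        · have hadj : G.Adj x w ↔ G.Adj y w := by
            simpa [pattern] using congrFun hxy ⟨w, hwS⟩
          simp only [hdist x hx w hwS, hdist y hy w hwS, hadj] at hwdist
          exact hwdist rfl
    _ = 2 ^ #S := by simp

lemma degree_le_two_pow_add_card {u : V} {S : Finset V} (hres : IsResolvingSet G (insert u S))
    (hS : S ⊆ G.neighborFinset u) : G.degree u ≤ 2 ^ #S + #S := by
  have hsdiff := card_neighborFinset_sdiff_le_two_pow hres hS
  rw [card_sdiff_of_subset hS, card_neighborFinset_eq_degree] at hsdiff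
  omega

end SimpleGraph

theorem maxDegree_le_of_resWt_general [Fintype V] (G : SimpleGraph V) [DecidableRel G.Adj]
    (k : ℕ)
    (h : ∀ W : Finset V, W.card = k → IsWTRSet G W) :
    G.maxDegree ≤ 2 ^ (k - 1) + (k - 1) := by
  classical
  refine G.maxDegree_le_of_forall_degree_le _ fun u ↦ ?_
  by_cases hsmall : G.degree u ≤ k - 1
  · exact hsmall.trans (Nat.le_add_left _ _)
  obtain ⟨S, hSu, hScard⟩ := exists_subset_card_eq (s := G.neighborFinset u) (n := k - 1)
    (by rw [card_neighborFinset_eq_degree]; omega)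
  have huS : u ∉ S := fun hu ↦ G.notMem_neighborFinset_self u (hSu hu)
  have hres : IsResolvingSet G (insert u S) := by
    rcases k with _ | k
    · exact (h ∅ rfl).1.mono (empty_subset _)
    · exact (h _ (by rw [card_insert_of_notMem huS, hScard]; rfl)).1
  simpa [hScard] using G.degree_le_two_pow_add_card hres hSu

/-- if every `k`-subset of vertices is a WTR-set, then the maximum degree
of `G` is at most `2^(k-1) + k - 1`. -/
theorem maxDegree_le_of_resWt [Fintype V] (G : SimpleGraph V) [DecidableRel G.Adj]
    (hG : G.Connected) (k : ℕ)
    (h : ∀ W : Finset V, W.card = k → IsWTRSet G W) :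
    G.maxDegree ≤ 2 ^ (k - 1) + (k - 1) :=
  maxDegree_le_of_resWt_general G k h
end
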